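/- arXiv:2012.08361 — 3 statements merged into one kernel-verified Lean document; each statement's English description precedes it below -/
import Mathlib

section
/- Let R = κ{t_1,...,t_n} be the henselization at the origin of the polynomial ring κ[t_1,...,t_n] over a field κ, and let p = (t_{r+1},...,t_n). Then the quotient map π : R → R/p ≅ κ{t_1,...,t_r} admits a section s with Im(s) ∩ p = 0, and consequently s extends uniquely to a section Frac(κ{t_1,...,t_r}) → R_p of the localized map R_p → κ(p). -/
open IsLocalRing Polynomial

/-- `R` is a henselization of the local ring `O` along `f`: `R` is henselian local, `f` is a
local ring homomorphism, and `R` is initial among henselian local rings under `O`. -/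
def IsHenselization {O R : Type} [CommRing O] [IsLocalRing O] [CommRing R] [IsLocalRing R]
    (f : O →+* R) : Prop :=
  HenselianLocalRing R ∧ IsLocalHom f ∧
    ∀ (S : Type) [CommRing S] [IsLocalRing S], HenselianLocalRing S →
      ∀ g : O →+* S, IsLocalHom g → ∃! h : R →+* S, h.comp f = g

section Aux

lemma mem_span_range_X_iff {σ K : Type*} [CommSemiring K] (a : MvPolynomial σ K) :
    a ∈ Ideal.span (Set.range (MvPolynomial.X : σ → MvPolynomial σ K)) ↔
      MvPolynomial.constantCoeff a = 0 := by
  rw [← Set.image_univ, MvPolynomial.mem_ideal_span_X_image]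
  rw [MvPolynomial.constantCoeff_eq, ← MvPolynomial.notMem_support_iff]
  constructor
  · intro h h0
    obtain ⟨i, -, hi⟩ := h 0 h0
    exact hi rfl
  · intro h mo hmo
    by_contra hc
    push_neg at hc
    have : mo = 0 := Finsupp.ext fun i => hc i (Set.mem_univ i)
    exact h (this ▸ hmo)

variable {A : Type*} [CommRing A] [IsLocalRing A]

lemma quot_isLocalRing (I : Ideal A) (hI : I ≠ ⊤) : IsLocalRing (A ⧸ I) := by
  have : Nontrivial (A ⧸ I) := Ideal.Quotient.nontrivial_iff.mpr hI
  exact IsLocalRing.of_surjective' (Ideal.Quotient.mk I) Ideal.Quotient.mk_surjective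

lemma quot_isLocalHom (I : Ideal A) (hI : I ≠ ⊤) : IsLocalHom (Ideal.Quotient.mk I) := by
  have : Nontrivial (A ⧸ I) := Ideal.Quotient.nontrivial_iff.mpr hI
  exact IsLocalHom.of_surjective _ Ideal.Quotient.mk_surjective

lemma quot_henselian [HenselianLocalRing A] (I : Ideal A) (hI : I ≠ ⊤) :
    HenselianLocalRing (A ⧸ I) := by
  letI := quot_isLocalRing I hI
  have : Nontrivial (A ⧸ I) := Ideal.Quotient.nontrivial_iff.mpr hI
  have hloc := quot_isLocalHom I hI
  refine ⟨fun F hF b₀ h1 h2 => ?_⟩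
  have hlift : F ∈ lifts (Ideal.Quotient.mk I) := by
    obtain ⟨q, hq⟩ := Polynomial.map_surjective _ Ideal.Quotient.mk_surjective F
    exact ⟨q, hq⟩
  obtain ⟨f, hfmap, -, hfmonic⟩ := lifts_and_degree_eq_and_monic hlift hF
  obtain ⟨a₀, rfl⟩ := Ideal.Quotient.mk_surjective b₀
  have keval : ∀ (g : A[X]) (b : A), (g.map (Ideal.Quotient.mk I)).eval (Ideal.Quotient.mk I b) =
      Ideal.Quotient.mk I (g.eval b) := fun g b => by
    rw [eval_map, eval₂_hom]
  have h1' : f.eval a₀ ∈ maximalIdeal A := by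
    rw [mem_maximalIdeal, mem_nonunits_iff]
    intro hu
    have : IsUnit (F.eval (Ideal.Quotient.mk I a₀)) := by
      rw [← hfmap, keval]; exact hu.map _
    rw [mem_maximalIdeal, mem_nonunits_iff] at h1
    exact h1 this
  have h2' : IsUnit (f.derivative.eval a₀) := by
    apply isUnit_of_map_unit (Ideal.Quotient.mk I)
    rw [← eval₂_hom, ← eval_map, ← derivative_map, hfmap]
    exact h2
  obtain ⟨a, ha, hmem⟩ := HenselianLocalRing.is_henselian f hfmonic a₀ h1' h2'
  refine ⟨Ideal.Quotient.mk I a, ?_, ?_⟩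
  · show F.eval _ = 0
    rw [← hfmap, keval, show f.eval a = 0 from ha, map_zero]
  · rw [← map_sub]
    rw [mem_maximalIdeal, mem_nonunits_iff]
    intro hu
    have := isUnit_of_map_unit (Ideal.Quotient.mk I) _ hu
    rw [mem_maximalIdeal, mem_nonunits_iff] at hmem
    exact hmem this

end Aux

theorem section_of_henselization_quotient'
    (κ : Type) [Field κ] (n r : ℕ) (hr : r ≤ n)
    (m : Ideal (MvPolynomial (Fin n) κ))
    (hm : m = Ideal.span (Set.range MvPolynomial.X)) [m.IsPrime]
    (R : Type) [CommRing R] [IsLocalRing R]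
    (f : Localization.AtPrime m →+* R)
    (hf : HenselianLocalRing R ∧ IsLocalHom f ∧
      ∀ (S : Type) [CommRing S] [IsLocalRing S], HenselianLocalRing S →
        ∀ g : Localization.AtPrime m →+* S, IsLocalHom g → ∃! h : R →+* S, h.comp f = g)
    (p : Ideal R)
    (hp : p = Ideal.span
      {x | ∃ i : Fin n, r ≤ (i : ℕ) ∧
        x = f (algebraMap (MvPolynomial (Fin n) κ) (Localization.AtPrime m)
          (MvPolynomial.X i))})
    [p.IsPrime] :
    ∃ s : (R ⧸ p) →+* R,
      (Ideal.Quotient.mk p).comp s = RingHom.id (R ⧸ p) ∧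
      (∀ y : R ⧸ p, s y ∈ p → y = 0) ∧
      ∃! s' : IsLocalRing.ResidueField (Localization.AtPrime p) →+* Localization.AtPrime p,
        (IsLocalRing.residue (Localization.AtPrime p)).comp s' = RingHom.id _ ∧
        ∀ x : R, s' (IsLocalRing.residue (Localization.AtPrime p)
            (algebraMap R (Localization.AtPrime p) x)) =
          algebraMap R (Localization.AtPrime p) (s (Ideal.Quotient.mk p x)) := by
  classical
  obtain ⟨hhens, hfloc, huniv⟩ := hf
  haveI := hhens
  haveI := hfloc
  -- the substitution map killing the last variables
  set v : Fin n → MvPolynomial (Fin n) κ := fun i => if (i : ℕ) < r then MvPolynomial.X i else 0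
    with hv
  set φ : MvPolynomial (Fin n) κ →+* MvPolynomial (Fin n) κ :=
    (MvPolynomial.aeval v).toRingHom with hφ
  have hφC : ∀ a : κ, φ (MvPolynomial.C a) = MvPolynomial.C a := fun a => by
    simp [hφ, MvPolynomial.algebraMap_eq]
  have hφX : ∀ i : Fin n, φ (MvPolynomial.X i) = v i := fun i => by
    simp [hφ]
  have hcc : ∀ a, MvPolynomial.constantCoeff (φ a) = MvPolynomial.constantCoeff a := by
    intro a
    have : (MvPolynomial.constantCoeff).comp φ =
        (MvPolynomial.constantCoeff : MvPolynomial (Fin n) κ →+* κ) := by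
      apply MvPolynomial.ringHom_ext
      · intro a; simp [hφC]
      · intro i
        simp only [RingHom.comp_apply, hφX, hv]
        split <;> simp
    exact congrFun (congrArg DFunLike.coe this) a
  have hcomap : m = m.comap φ := by
    ext a
    rw [Ideal.mem_comap, hm, mem_span_range_X_iff, mem_span_range_X_iff, hcc]
  set lφ : Localization.AtPrime m →+* Localization.AtPrime m :=
    Localization.localRingHom m m φ hcomap with hlφ
  haveI : IsLocalHom lφ := Localization.isLocalHom_localRingHom m m φ hcomap
  set g : Localization.AtPrime m →+* R := f.comp lφ with hg
  haveI : IsLocalHom g := inferInstance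
  obtain ⟨h, hh, huniq⟩ := huniv R hhens g inferInstance
  have hhf : ∀ y, h (f y) = g y := fun y => congrFun (congrArg DFunLike.coe hh) y
  have hlφalg : ∀ a, lφ (algebraMap (MvPolynomial (Fin n) κ) (Localization.AtPrime m) a) =
      algebraMap _ _ (φ a) := fun a => Localization.localRingHom_to_map m m φ hcomap a
  -- generators of p are killed by h
  have hgen : ∀ i : Fin n, r ≤ (i : ℕ) →
      h (f (algebraMap (MvPolynomial (Fin n) κ) (Localization.AtPrime m) (MvPolynomial.X i)))
        = 0 := by
    intro i hi
    rw [hhf, hg, RingHom.comp_apply, hlφalg, hφX]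
    have : v i = 0 := by simp [hv, Nat.not_lt.mpr hi]
    rw [this, map_zero, map_zero]
  have hker : p ≤ RingHom.ker h := by
    rw [hp, Ideal.span_le]
    rintro x ⟨i, hi, rfl⟩
    exact hgen i hi
  set s : (R ⧸ p) →+* R := Ideal.Quotient.lift p h hker with hs
  have hsmk : ∀ x : R, s (Ideal.Quotient.mk p x) = h x := fun x =>
    Ideal.Quotient.lift_mk p h hker
  -- the section property
  haveI hploc : IsLocalRing (R ⧸ p) := quot_isLocalRing p (Ideal.IsPrime.ne_top ‹_›)
  have hphens : HenselianLocalRing (R ⧸ p) := quot_henselian p (Ideal.IsPrime.ne_top ‹_›)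
  haveI : IsLocalHom (Ideal.Quotient.mk p) := quot_isLocalHom p (Ideal.IsPrime.ne_top ‹_›)
  have hpig : (Ideal.Quotient.mk p).comp g = (Ideal.Quotient.mk p).comp f := by
    apply IsLocalization.ringHom_ext m.primeCompl
    apply MvPolynomial.ringHom_ext
    · intro a
      simp only [RingHom.comp_apply, hg, hlφalg, hφC]
    · intro i
      simp only [RingHom.comp_apply, hg, hlφalg, hφX]
      by_cases hi : (i : ℕ) < r
      · rw [hv]; simp [hi]
      · have hv0 : v i = 0 := by simp [hv, hi]
        rw [hv0, map_zero, map_zero, map_zero]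
        have : f (algebraMap (MvPolynomial (Fin n) κ) (Localization.AtPrime m)
            (MvPolynomial.X i)) ∈ p := by
          rw [hp]
          exact Ideal.subset_span ⟨i, Nat.not_lt.mp hi, rfl⟩
        exact (Ideal.Quotient.eq_zero_iff_mem.mpr this).symm
  have hcomp : (Ideal.Quotient.mk p).comp h = Ideal.Quotient.mk p := by
    obtain ⟨k, -, hk⟩ := huniv (R ⧸ p) hphens ((Ideal.Quotient.mk p).comp f) inferInstance
    have h1 : ((Ideal.Quotient.mk p).comp h).comp f = (Ideal.Quotient.mk p).comp f := by
      rw [RingHom.comp_assoc, hh, hpig]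
    rw [hk _ h1, hk (Ideal.Quotient.mk p) rfl]
  have hsec : (Ideal.Quotient.mk p).comp s = RingHom.id (R ⧸ p) := by
    apply RingHom.ext
    intro y
    obtain ⟨x, rfl⟩ := Ideal.Quotient.mk_surjective y
    rw [RingHom.comp_apply, hsmk, RingHom.id_apply]
    exact congrFun (congrArg DFunLike.coe hcomp) x
  have hsecy : ∀ y, Ideal.Quotient.mk p (s y) = y := fun y =>
    congrFun (congrArg DFunLike.coe hsec) y
  have hinj : ∀ y : R ⧸ p, s y ∈ p → y = 0 := by
    intro y hy
    rw [← hsecy y, Ideal.Quotient.eq_zero_iff_mem]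
    exact hy
  refine ⟨s, hsec, hinj, ?_⟩
  set Rp := Localization.AtPrime p with hRp
  set ψ : R →+* Rp := algebraMap R Rp with hψ
  set g₀ : R →+* Rp := ψ.comp (s.comp (Ideal.Quotient.mk p)) with hg₀def
  have hg₀ : ∀ y : p.primeCompl, IsUnit (g₀ y) := by
    rintro ⟨y, hy⟩
    have hsy : s (Ideal.Quotient.mk p y) ∈ p.primeCompl := by
      intro hmem
      exact hy (by
        have := hinj _ hmem
        rwa [Ideal.Quotient.eq_zero_iff_mem] at this)
    exact (IsLocalization.AtPrime.isUnit_to_map_iff Rp p _).mpr hsy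
  set θ : Rp →+* Rp := IsLocalization.lift (M := p.primeCompl) hg₀ with hθdef
  have hθalg : ∀ x : R, θ (ψ x) = ψ (s (Ideal.Quotient.mk p x)) := fun x =>
    IsLocalization.lift_eq hg₀ x
  have hmax : Ideal.map ψ p = maximalIdeal Rp := Localization.AtPrime.map_eq_maximalIdeal
  have hθker : ∀ z ∈ maximalIdeal Rp, θ z = 0 := by
    intro z hz
    rw [← hmax] at hz
    have hle : Ideal.map ψ p ≤ RingHom.ker θ := by
      rw [Ideal.map_le_iff_le_comap]
      intro x hx
      rw [Ideal.mem_comap, RingHom.mem_ker, hθalg,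
        Ideal.Quotient.eq_zero_iff_mem.mpr hx, map_zero, map_zero]
    exact hle hz
  set s' : IsLocalRing.ResidueField Rp →+* Rp :=
    Ideal.Quotient.lift (maximalIdeal Rp) θ hθker with hs'def
  have hs'res : ∀ z : Rp, s' (IsLocalRing.residue Rp z) = θ z := fun z =>
    Ideal.Quotient.lift_mk (maximalIdeal Rp) θ hθker
  have hcompat : ∀ x : R, s' (IsLocalRing.residue Rp (ψ x)) =
      ψ (s (Ideal.Quotient.mk p x)) := by
    intro x
    rw [hs'res, hθalg]
  refine ⟨s', ⟨?_, hcompat⟩, ?_⟩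
  · -- residue ∘ s' = id
    apply RingHom.ext
    intro z
    obtain ⟨w, rfl⟩ := Ideal.Quotient.mk_surjective (I := maximalIdeal Rp) z
    show IsLocalRing.residue Rp (s' (IsLocalRing.residue Rp w)) = IsLocalRing.residue Rp w
    rw [hs'res]
    have hres : (IsLocalRing.residue Rp).comp θ = IsLocalRing.residue Rp := by
      apply IsLocalization.ringHom_ext p.primeCompl
      apply RingHom.ext
      intro x
      show IsLocalRing.residue Rp (θ (ψ x)) = IsLocalRing.residue Rp (ψ x)
      rw [hθalg]
      apply Ideal.Quotient.eq.mpr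
      rw [← map_sub]
      have hsub : s (Ideal.Quotient.mk p x) - x ∈ p := by
        rw [← Ideal.Quotient.eq]
        exact hsecy _
      rw [← hmax]
      exact Ideal.mem_map_of_mem ψ hsub
    exact congrFun (congrArg DFunLike.coe hres) w
  · -- uniqueness
    rintro y ⟨-, hy2⟩
    apply RingHom.ext
    intro z
    obtain ⟨w, rfl⟩ := Ideal.Quotient.mk_surjective (I := maximalIdeal Rp) z
    obtain ⟨⟨x, u⟩, rfl⟩ := IsLocalization.mk'_surjective p.primeCompl w
    have hcunit : IsUnit (ψ (s (Ideal.Quotient.mk p (u : R)))) := hg₀ u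
    have hspec : IsLocalization.mk' Rp x u * ψ (u : R) = ψ x :=
      IsLocalization.mk'_spec Rp x u
    have key : ∀ t : IsLocalRing.ResidueField Rp →+* Rp,
        (∀ x : R, t (IsLocalRing.residue Rp (ψ x)) = ψ (s (Ideal.Quotient.mk p x))) →
        t (IsLocalRing.residue Rp (IsLocalization.mk' Rp x u)) *
            ψ (s (Ideal.Quotient.mk p (u : R))) =
          ψ (s (Ideal.Quotient.mk p x)) := by
      intro t ht
      rw [← ht x, ← ht (u : R), ← map_mul, ← map_mul, hspec]
    have h1 := key y hy2
    have h2 := key s' hcompat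
    show y (IsLocalRing.residue Rp (IsLocalization.mk' Rp x u)) =
      s' (IsLocalRing.residue Rp (IsLocalization.mk' Rp x u))
    apply hcunit.mul_left_cancel
    rw [mul_comm _ (y _), mul_comm _ (s' _), h1, h2]


/-- Let `R = κ{t_1, …, t_n}` be the henselization at the origin of the polynomial ring
`κ[t_1, …, t_n]` over a field `κ`, and let `p = (t_{r+1}, …, t_n)`.  Then the quotient map
`π : R → R ⧸ p ≅ κ{t_1, …, t_r}` admits a section `s` with `Im(s) ∩ p = 0`, and consequently
`s` extends uniquely to a section `Frac(κ{t_1, …, t_r}) → R_p` of the localized map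
`R_p → κ(p)`. -/
theorem section_of_henselization_quotient
    (κ : Type) [Field κ] (n r : ℕ) (hr : r ≤ n)
    (m : Ideal (MvPolynomial (Fin n) κ))
    (hm : m = Ideal.span (Set.range MvPolynomial.X)) [m.IsPrime]
    (R : Type) [CommRing R] [IsLocalRing R]
    (f : Localization.AtPrime m →+* R) (hf : IsHenselization f)
    (p : Ideal R)
    (hp : p = Ideal.span
      {x | ∃ i : Fin n, r ≤ (i : ℕ) ∧
        x = f (algebraMap (MvPolynomial (Fin n) κ) (Localization.AtPrime m)
          (MvPolynomial.X i))})
    [p.IsPrime] :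
    ∃ s : (R ⧸ p) →+* R,
      (Ideal.Quotient.mk p).comp s = RingHom.id (R ⧸ p) ∧
      (∀ y : R ⧸ p, s y ∈ p → y = 0) ∧
      ∃! s' : IsLocalRing.ResidueField (Localization.AtPrime p) →+* Localization.AtPrime p,
        (IsLocalRing.residue (Localization.AtPrime p)).comp s' = RingHom.id _ ∧
        ∀ x : R, s' (IsLocalRing.residue (Localization.AtPrime p)
            (algebraMap R (Localization.AtPrime p) x)) =
          algebraMap R (Localization.AtPrime p) (s (Ideal.Quotient.mk p x)) := by
  exact section_of_henselization_quotient' κ n r hr m hm R f hf p hp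
end

section
/- Let F : C → D be a functor between categories, with D cocomplete, such that F preserves finite limits, and suppose C is a small-generated (accessible) setting where the pro-category pro-C exists. Then F admits a pro-left adjoint G : D → pro-C, i.e. for every d ∈ D and c ∈ C there is a natural isomorphism Hom_{pro-C}(G(d), c) ≅ Hom_D(d, F(c)). -/
open CategoryTheory CategoryTheory.Limits Opposite

universe u

/-- A presentation of a functor `G : C ⥤ Type` as a pro-object of `C`: a cofiltered diagram
`X : I ⥤ C` such that `G ≅ colim_i Hom(X i, -)`, i.e. `G` is pro-represented by
`"lim" X_i`.  A natural isomorphism `Hom_D(d, F(-)) ≅ colim_i Hom_C(X i, -)` means exactly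
that `Hom_{pro-C}("lim" X_i, c) ≅ Hom_D(d, F c)` naturally in `c`. -/
structure ProPresentation (C : Type u) [SmallCategory C] (G : C ⥤ Type u) where
  I : Type u
  [instI : SmallCategory I]
  [cofiltered : IsCofiltered I]
  X : I ⥤ C
  iso : G ≅ colimit (X.op ⋙ coyoneda)

/-- Let `F : C → D` be a functor preserving finite limits, with `C` finitely complete and `D`
cocomplete.  Then `F` admits a pro-left adjoint `G : D → pro-C`: for every `d ∈ D` the
functor `c ↦ Hom_D(d, F c)` is pro-representable by a cofiltered diagram in `C`. -/
theorem exists_pro_left_adjoint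
    {C D : Type u} [SmallCategory C] [SmallCategory D]
    [HasFiniteLimits C] [HasColimits D]
    (F : C ⥤ D) [PreservesFiniteLimits F] :
    ∀ d : D, Nonempty (ProPresentation C (F ⋙ coyoneda.obj (op d))) := by
  intro d
  let G : C ⥤ Type u := F ⋙ coyoneda.obj (op d)
  let A : Cᵒᵖᵒᵖ ⥤ Type u := unopUnop C ⋙ G
  haveI : (unopUnop C).IsEquivalence := (opOpEquivalence C).isEquivalence_functor
  haveI h1 : PreservesFiniteLimits (unopUnop C) :=
    PreservesLimitsOfSize.preservesFiniteLimits.{u, u} _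
  haveI h2 : PreservesFiniteLimits (coyoneda.obj (op d)) :=
    PreservesLimitsOfSize.preservesFiniteLimits.{u, u} _
  haveI hG : PreservesFiniteLimits G := comp_preservesFiniteLimits _ _
  haveI : PreservesFiniteLimits A := comp_preservesFiniteLimits _ _
  haveI : IsFiltered (CostructuredArrow yoneda A) :=
    isFiltered_costructuredArrow_yoneda_of_preservesFiniteLimits A
  let P := CostructuredArrow.proj yoneda A
  let X : (CostructuredArrow yoneda A)ᵒᵖ ⥤ C := P.leftOp
  let W := (Functor.whiskeringLeft C Cᵒᵖᵒᵖ (Type u)).obj (opOp C)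
  let e₁ : A ≅ colimit (P ⋙ yoneda) :=
    IsColimit.coconePointUniqueUpToIso (Presheaf.isColimitTautologicalCocone A)
      (colimit.isColimit _)
  let e₂ : opOp C ⋙ colimit (P ⋙ yoneda) ≅ colimit ((P ⋙ yoneda) ⋙ W) :=
    (colimitCompWhiskeringLeftIsoCompColimit (P ⋙ yoneda) (opOp C)).symm
  let dIso : opOp (CostructuredArrow yoneda A) ⋙ (X.op ⋙ coyoneda) ≅ (P ⋙ yoneda) ⋙ W :=
    NatIso.ofComponents
      (fun j => NatIso.ofComponents
        (fun c => Equiv.toIso (opEquiv (op c) (P.obj j)).symm)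
        (by intro c c' f; ext g; rfl))
      (by intro i j f; ext c g; rfl)
  let e₃ : colimit ((P ⋙ yoneda) ⋙ W) ≅ colimit (X.op ⋙ coyoneda) := by
    haveI : (opOp (CostructuredArrow yoneda A)).IsEquivalence :=
      (opOpEquivalence _).isEquivalence_inverse
    exact Iso.trans (HasColimit.isoOfNatIso dIso.symm)
      (Functor.Final.colimitIso (opOp (CostructuredArrow yoneda A)) (X.op ⋙ coyoneda))
  exact ⟨{ I := (CostructuredArrow yoneda A)ᵒᵖ
           X := X
           iso := (Functor.isoWhiskerLeft (opOp C) e₁ : G ≅ _) ≪≫ e₂ ≪≫ e₃ }⟩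
end

section
/- Let C be a cocomplete category. Then the pro-category pro-C is cocomplete, where filtered colimits of pro-objects with the same index can be computed level-wise and general colimits are built from finite colimits and filtered colimits. -/
open CategoryTheory CategoryTheory.Limits

universe u

/-- A pro-object of `C`: a cofiltered diagram in `C`, thought of as the formal limit
`"lim" X_i`. -/
structure ProObj (C : Type (u + 1)) [Category.{u} C] where
  I : Type u
  [instI : SmallCategory I]
  [cofiltered : IsCofiltered I]
  X : I ⥤ C

attribute [instance] ProObj.instI ProObj.cofiltered

/-- The contravariant functor-category embedding of pro-objects, `"lim" X_i ↦
(c ↦ colim_i Hom(X_i, c))`; it realizes the pro-morphisms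
`Hom("lim" X_i, "lim" Y_j) = lim_j colim_i Hom(X_i, Y_j)`. -/
noncomputable def ProObj.toFunctorOp (C : Type (u + 1)) [Category.{u} C] (P : ProObj C) :
    (C ⥤ Type u)ᵒᵖ :=
  Opposite.op (colimit (P.X.op ⋙ coyoneda))

/-- The category `pro-C`, with morphisms induced from the embedding into
`(C ⥤ Type)ᵒᵖ`, so that `Hom("lim" X_i, "lim" Y_j) = lim_j colim_i Hom(X_i, Y_j)`. -/
noncomputable instance proCategory (C : Type (u + 1)) [Category.{u} C] :
    Category.{u + 1} (ProObj C) :=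
  { Hom := fun X Y => ProObj.toFunctorOp C X ⟶ ProObj.toFunctorOp C Y
    id := fun X => 𝟙 (ProObj.toFunctorOp C X)
    comp := fun f g => f ≫ g }


open Limits Opposite

universe v

namespace ProAux

variable {C : Type u} [Category.{v} C]

section Rep

variable {B : Cᵒᵖ ⥤ Type v} (Q : IndObjectPresentation B)

lemma rep_exists (X : C) (u : yoneda.obj X ⟶ B) :
    ∃ (j : Q.I) (p : X ⟶ Q.F.obj j), yoneda.map p ≫ Q.ι.app j = u := by
  have hc := isColimitOfPreserves ((evaluation Cᵒᵖ (Type v)).obj (op X)) Q.coconeIsColimit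
  obtain ⟨j, p, hp⟩ := Types.jointly_surjective _ hc (yonedaEquiv u)
  refine ⟨j, p, yonedaEquiv.injective ?_⟩
  rw [yonedaEquiv_comp, yonedaEquiv_yoneda_map]
  exact hp

lemma rep_eq {X : C} {j₁ j₂ : Q.I} (p₁ : X ⟶ Q.F.obj j₁) (p₂ : X ⟶ Q.F.obj j₂)
    (h : yoneda.map p₁ ≫ Q.ι.app j₁ = yoneda.map p₂ ≫ Q.ι.app j₂) :
    ∃ (j : Q.I) (e₁ : j₁ ⟶ j) (e₂ : j₂ ⟶ j), p₁ ≫ Q.F.map e₁ = p₂ ≫ Q.F.map e₂ := by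
  have hc := isColimitOfPreserves ((evaluation Cᵒᵖ (Type v)).obj (op X)) Q.coconeIsColimit
  have h' : (((evaluation Cᵒᵖ (Type v)).obj (op X)).mapCocone Q.cocone).ι.app j₁ p₁ =
      (((evaluation Cᵒᵖ (Type v)).obj (op X)).mapCocone Q.cocone).ι.app j₂ p₂ := by
    have := congrArg yonedaEquiv h
    rwa [yonedaEquiv_comp, yonedaEquiv_yoneda_map, yonedaEquiv_comp, yonedaEquiv_yoneda_map]
      at this
  exact (Types.FilteredColimit.isColimit_eq_iff _ hc).mp h'

end Rep

section Pair

variable {A B : Cᵒᵖ ⥤ Type v} (P : IndObjectPresentation A) (Q : IndObjectPresentation B)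

/-- `p : P.F.obj i ⟶ Q.F.obj j` represents `h : A ⟶ B` at level `(i, j)`. -/
def Cond (h : A ⟶ B) {i : P.I} {j : Q.I} (p : P.F.obj i ⟶ Q.F.obj j) : Prop :=
  yoneda.map p ≫ Q.ι.app j = P.ι.app i ≫ h

variable {P Q}

lemma Cond.push {h : A ⟶ B} {i : P.I} {j j' : Q.I} {p : P.F.obj i ⟶ Q.F.obj j} (β : j ⟶ j')
    (hp : Cond P Q h p) : Cond P Q h (p ≫ Q.F.map β) := by
  have hβ : yoneda.map (Q.F.map β) ≫ Q.ι.app j' = Q.ι.app j := by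
    simpa using Q.ι.naturality β
  rw [Cond, Functor.map_comp, Category.assoc, hβ, hp]

lemma Cond.pre {h : A ⟶ B} {i i' : P.I} {j : Q.I} {p : P.F.obj i ⟶ Q.F.obj j} (α : i' ⟶ i)
    (hp : Cond P Q h p) : Cond P Q h (P.F.map α ≫ p) := by
  have hα : yoneda.map (P.F.map α) ≫ P.ι.app i = P.ι.app i' := by
    simpa using P.ι.naturality α
  rw [Cond, Functor.map_comp, Category.assoc, hp, ← Category.assoc, hα]

lemma exists_cond (h : A ⟶ B) (i : P.I) : ∃ (j : Q.I) (p : P.F.obj i ⟶ Q.F.obj j),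
    Cond P Q h p :=
  rep_exists Q (P.F.obj i) (P.ι.app i ≫ h)

lemma cond_eq {h : A ⟶ B} {i : P.I} {j₁ j₂ : Q.I} {p₁ : P.F.obj i ⟶ Q.F.obj j₁}
    {p₂ : P.F.obj i ⟶ Q.F.obj j₂} (h₁ : Cond P Q h p₁) (h₂ : Cond P Q h p₂) :
    ∃ (j : Q.I) (e₁ : j₁ ⟶ j) (e₂ : j₂ ⟶ j), p₁ ≫ Q.F.map e₁ = p₂ ≫ Q.F.map e₂ :=
  rep_eq Q p₁ p₂ (h₁.trans h₂.symm)

variable (P Q) in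
/-- Objects: simultaneous level-wise presentations of a parallel pair `f g : A ⟶ B`. -/
structure PairObj (f g : A ⟶ B) where
  i : P.I
  j : Q.I
  p : P.F.obj i ⟶ Q.F.obj j
  q : P.F.obj i ⟶ Q.F.obj j
  hp : Cond P Q f p
  hq : Cond P Q g q

variable {f g : A ⟶ B}

/-- Morphisms of pair presentations. -/
@[ext]
structure PairHom (k k' : PairObj P Q f g) where
  α : k.i ⟶ k'.i
  β : k.j ⟶ k'.j
  wp : P.F.map α ≫ k'.p = k.p ≫ Q.F.map β
  wq : P.F.map α ≫ k'.q = k.q ≫ Q.F.map β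

instance : Category (PairObj P Q f g) where
  Hom := PairHom
  id k := ⟨𝟙 _, 𝟙 _, by simp, by simp⟩
  comp {k₁ k₂ k₃} m n := ⟨m.α ≫ n.α, m.β ≫ n.β, by
      rw [Functor.map_comp, Functor.map_comp, Category.assoc, n.wp, ← Category.assoc, m.wp,
        Category.assoc], by
      rw [Functor.map_comp, Functor.map_comp, Category.assoc, n.wq, ← Category.assoc, m.wq,
        Category.assoc]⟩
  id_comp m := by apply PairHom.ext <;> simp [CategoryStruct.id, CategoryStruct.comp]
  comp_id m := by apply PairHom.ext <;> simp [CategoryStruct.id, CategoryStruct.comp]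
  assoc m n o := by apply PairHom.ext <;> simp [CategoryStruct.comp]

@[simp] lemma pair_id_α (k : PairObj P Q f g) : PairHom.α (𝟙 k) = 𝟙 k.i := rfl
@[simp] lemma pair_id_β (k : PairObj P Q f g) : PairHom.β (𝟙 k) = 𝟙 k.j := rfl
@[simp] lemma pair_comp_α {k₁ k₂ k₃ : PairObj P Q f g} (m : k₁ ⟶ k₂) (n : k₂ ⟶ k₃) :
    PairHom.α (m ≫ n) = m.α ≫ n.α := rfl
@[simp] lemma pair_comp_β {k₁ k₂ k₃ : PairObj P Q f g} (m : k₁ ⟶ k₂) (n : k₂ ⟶ k₃) :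
    PairHom.β (m ≫ n) = m.β ≫ n.β := rfl

/-- Push a pair presentation forward along a morphism in the second index. -/
@[simps]
def PairObj.pushJ (k : PairObj P Q f g) {j' : Q.I} (β : k.j ⟶ j') : PairObj P Q f g where
  i := k.i
  j := j'
  p := k.p ≫ Q.F.map β
  q := k.q ≫ Q.F.map β
  hp := k.hp.push β
  hq := k.hq.push β

/-- The canonical morphism into a pushed pair presentation. -/
@[simps]
def PairObj.pushJHom (k : PairObj P Q f g) {j' : Q.I} (β : k.j ⟶ j') : k ⟶ k.pushJ β :=
  ⟨𝟙 _, β, by simp [PairObj.pushJ], by simp [PairObj.pushJ]⟩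

lemma exists_pairObj (i : P.I) :
    ∃ k : PairObj P Q f g, k.i = i := by
  obtain ⟨j₁, p₁, hp₁⟩ := exists_cond (P := P) (Q := Q) f i
  obtain ⟨j₂, q₂, hq₂⟩ := exists_cond (P := P) (Q := Q) g i
  exact ⟨⟨i, IsFiltered.max j₁ j₂, p₁ ≫ Q.F.map (IsFiltered.leftToMax j₁ j₂),
    q₂ ≫ Q.F.map (IsFiltered.rightToMax j₁ j₂),
    hp₁.push _, hq₂.push _⟩, rfl⟩

/-- Core extension step. -/
lemma extend_one (k : PairObj P Q f g) {i : P.I} (α : k.i ⟶ i) {j : Q.I}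
    (p q : P.F.obj i ⟶ Q.F.obj j) (hp : Cond P Q f p) (hq : Cond P Q g q) :
    ∃ (j' : Q.I) (ε : j ⟶ j') (β : k.j ⟶ j'),
      P.F.map α ≫ p ≫ Q.F.map ε = k.p ≫ Q.F.map β ∧
      P.F.map α ≫ q ≫ Q.F.map ε = k.q ≫ Q.F.map β := by
  obtain ⟨j₁, ε₁, β₁, w₁⟩ := cond_eq (hp.pre α) k.hp
  obtain ⟨j₂, ε₂, β₂, w₂⟩ := cond_eq ((hq.pre α).push ε₁) k.hq
  set γ := IsFiltered.coeqHom (β₁ ≫ ε₂) β₂ with hγ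
  have hco : (β₁ ≫ ε₂) ≫ γ = β₂ ≫ γ := IsFiltered.coeq_condition _ _
  refine ⟨IsFiltered.coeq (β₁ ≫ ε₂) β₂, ε₁ ≫ ε₂ ≫ γ, β₂ ≫ γ, ?_, ?_⟩
  · calc P.F.map α ≫ p ≫ Q.F.map (ε₁ ≫ ε₂ ≫ γ)
        = (((P.F.map α ≫ p) ≫ Q.F.map ε₁) ≫ Q.F.map ε₂) ≫ Q.F.map γ := by simp
      _ = ((k.p ≫ Q.F.map β₁) ≫ Q.F.map ε₂) ≫ Q.F.map γ := by rw [w₁]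
      _ = k.p ≫ Q.F.map ((β₁ ≫ ε₂) ≫ γ) := by simp
      _ = k.p ≫ Q.F.map (β₂ ≫ γ) := by rw [hco]
  · calc P.F.map α ≫ q ≫ Q.F.map (ε₁ ≫ ε₂ ≫ γ)
        = (((P.F.map α ≫ q) ≫ Q.F.map ε₁) ≫ Q.F.map ε₂) ≫ Q.F.map γ := by simp
      _ = (k.q ≫ Q.F.map β₂) ≫ Q.F.map γ := by rw [w₂]
      _ = k.q ≫ Q.F.map (β₂ ≫ γ) := by simp

lemma exists_extend_core (k₁ k₂ : PairObj P Q f g) {i : P.I} (α₁ : k₁.i ⟶ i)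
    (α₂ : k₂.i ⟶ i) :
    ∃ (j : Q.I) (p q : P.F.obj i ⟶ Q.F.obj j) (hp : Cond P Q f p) (hq : Cond P Q g q)
      (β₁ : k₁.j ⟶ j) (β₂ : k₂.j ⟶ j),
      (P.F.map α₁ ≫ p = k₁.p ≫ Q.F.map β₁) ∧ (P.F.map α₁ ≫ q = k₁.q ≫ Q.F.map β₁) ∧
      (P.F.map α₂ ≫ p = k₂.p ≫ Q.F.map β₂) ∧ (P.F.map α₂ ≫ q = k₂.q ≫ Q.F.map β₂) := by
  obtain ⟨j₀, p₀, hp₀⟩ := exists_cond (P := P) (Q := Q) f i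
  obtain ⟨j₀', q₀', hq₀'⟩ := exists_cond (P := P) (Q := Q) g i
  set jA := IsFiltered.max j₀ j₀' with hjA
  set p := p₀ ≫ Q.F.map (IsFiltered.leftToMax j₀ j₀') with hpdef
  set q := q₀' ≫ Q.F.map (IsFiltered.rightToMax j₀ j₀') with hqdef
  have hp : Cond P Q f p := hp₀.push _
  have hq : Cond P Q g q := hq₀'.push _
  obtain ⟨j₁, ε₁, β₁, w₁p, w₁q⟩ := extend_one k₁ α₁ p q hp hq
  obtain ⟨j₂, ε₂, β₂, w₂p, w₂q⟩ := extend_one k₂ α₂ (p ≫ Q.F.map ε₁) (q ≫ Q.F.map ε₁)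
    (hp.push ε₁) (hq.push ε₁)
  refine ⟨j₂, p ≫ Q.F.map ε₁ ≫ Q.F.map ε₂, q ≫ Q.F.map ε₁ ≫ Q.F.map ε₂,
    by simpa using (hp.push ε₁).push ε₂, by simpa using (hq.push ε₁).push ε₂,
    β₁ ≫ ε₂, β₂, ?_, ?_, ?_, ?_⟩
  · calc P.F.map α₁ ≫ p ≫ Q.F.map ε₁ ≫ Q.F.map ε₂
        = (P.F.map α₁ ≫ p ≫ Q.F.map ε₁) ≫ Q.F.map ε₂ := by simp
      _ = (k₁.p ≫ Q.F.map β₁) ≫ Q.F.map ε₂ := by rw [w₁p]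
      _ = k₁.p ≫ Q.F.map (β₁ ≫ ε₂) := by simp
  · calc P.F.map α₁ ≫ q ≫ Q.F.map ε₁ ≫ Q.F.map ε₂
        = (P.F.map α₁ ≫ q ≫ Q.F.map ε₁) ≫ Q.F.map ε₂ := by simp
      _ = (k₁.q ≫ Q.F.map β₁) ≫ Q.F.map ε₂ := by rw [w₁q]
      _ = k₁.q ≫ Q.F.map (β₁ ≫ ε₂) := by simp
  · calc P.F.map α₂ ≫ p ≫ Q.F.map ε₁ ≫ Q.F.map ε₂
        = P.F.map α₂ ≫ (p ≫ Q.F.map ε₁) ≫ Q.F.map ε₂ := by simp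
      _ = k₂.p ≫ Q.F.map β₂ := w₂p
  · calc P.F.map α₂ ≫ q ≫ Q.F.map ε₁ ≫ Q.F.map ε₂
        = P.F.map α₂ ≫ (q ≫ Q.F.map ε₁) ≫ Q.F.map ε₂ := by simp
      _ = k₂.q ≫ Q.F.map β₂ := w₂q

instance : IsFilteredOrEmpty (PairObj P Q f g) where
  cocone_objs k₁ k₂ := by
    obtain ⟨j, p, q, hp, hq, β₁, β₂, w₁p, w₁q, w₂p, w₂q⟩ := exists_extend_core k₁ k₂
      (IsFiltered.leftToMax k₁.i k₂.i) (IsFiltered.rightToMax k₁.i k₂.i)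
    exact ⟨⟨IsFiltered.max k₁.i k₂.i, j, p, q, hp, hq⟩,
      ⟨IsFiltered.leftToMax k₁.i k₂.i, β₁, w₁p, w₁q⟩,
      ⟨IsFiltered.rightToMax k₁.i k₂.i, β₂, w₂p, w₂q⟩, trivial⟩
  cocone_maps k₁ k₂ m m' := by
    obtain ⟨j, p, q, hp, hq, β₁, β₂, w₁p, w₁q, w₂p, w₂q⟩ := exists_extend_core k₂ k₂
      (IsFiltered.coeqHom m.α m'.α) (IsFiltered.coeqHom m.α m'.α)
    set k : PairObj P Q f g := ⟨IsFiltered.coeq m.α m'.α, j, p, q, hp, hq⟩ with hk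
    set n : k₂ ⟶ k := ⟨IsFiltered.coeqHom m.α m'.α, β₁, w₁p, w₁q⟩ with hn
    refine ⟨k.pushJ (IsFiltered.coeqHom (m.β ≫ n.β) (m'.β ≫ n.β)),
      n ≫ k.pushJHom _, ?_⟩
    apply PairHom.ext
    · simp only [pair_comp_α, PairObj.pushJHom_α, Category.comp_id, hn]
      exact (Category.assoc _ _ _).symm.trans ((congrArg (· ≫ 𝟙 k.i)
        (IsFiltered.coeq_condition m.α m'.α)).trans (Category.assoc _ _ _))
    · simp only [pair_comp_β, PairObj.pushJHom_β]
      exact (Category.assoc _ _ _).symm.trans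
        ((IsFiltered.coeq_condition (m.β ≫ n.β) (m'.β ≫ n.β)).trans (Category.assoc _ _ _))

instance : IsFiltered (PairObj P Q f g) where
  nonempty := by
    obtain ⟨k, -⟩ := exists_pairObj (P := P) (Q := Q) (f := f) (g := g)
      (Classical.choice IsFiltered.nonempty)
    exact ⟨k⟩

variable (P Q f g) in
/-- First projection. -/
@[simps]
def pairFst : PairObj P Q f g ⥤ P.I where
  obj k := k.i
  map m := m.α

variable (P Q f g) in
/-- Second projection. -/
@[simps]
def pairSnd : PairObj P Q f g ⥤ Q.I where
  obj k := k.j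
  map m := m.β

instance : (pairFst P Q f g).Final := by
  apply Functor.final_of_exists_of_isFiltered
  · intro i
    obtain ⟨k, hk⟩ := exists_pairObj (P := P) (Q := Q) (f := f) (g := g) i
    exact ⟨k, ⟨eqToHom hk.symm⟩⟩
  · intro i k s s'
    obtain ⟨j, p, q, hp, hq, β₁, β₂, w₁p, w₁q, -, -⟩ := exists_extend_core k k
      (IsFiltered.coeqHom s s') (IsFiltered.coeqHom s s')
    refine ⟨⟨IsFiltered.coeq s s', j, p, q, hp, hq⟩,
      ⟨IsFiltered.coeqHom s s', β₁, w₁p, w₁q⟩, ?_⟩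
    exact IsFiltered.coeq_condition s s'

instance : (pairSnd P Q f g).Final := by
  apply Functor.final_of_exists_of_isFiltered
  · intro j
    obtain ⟨k, -⟩ := exists_pairObj (P := P) (Q := Q) (f := f) (g := g)
      (Classical.choice IsFiltered.nonempty)
    exact ⟨k.pushJ (IsFiltered.rightToMax j k.j), ⟨IsFiltered.leftToMax j k.j⟩⟩
  · intro j k s s'
    refine ⟨k.pushJ (IsFiltered.coeqHom s s'), k.pushJHom _, ?_⟩
    exact IsFiltered.coeq_condition s s'

end Pair

section Part4

variable {A B : Cᵒᵖ ⥤ Type v}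

open WalkingParallelPair WalkingParallelPairHom

/-- The first leg of the level-wise presentation of a parallel pair. -/
def pairφ (P : IndObjectPresentation A) (Q : IndObjectPresentation B) (f g : A ⟶ B) :
    (pairFst P Q f g ⋙ P.F) ⟶ (pairSnd P Q f g ⋙ Q.F) where
  app k := k.p
  naturality _ _ m := m.wp

/-- The second leg of the level-wise presentation of a parallel pair. -/
def pairψ (P : IndObjectPresentation A) (Q : IndObjectPresentation B) (f g : A ⟶ B) :
    (pairFst P Q f g ⋙ P.F) ⟶ (pairSnd P Q f g ⋙ Q.F) where
  app k := k.q
  naturality _ _ m := m.wq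

theorem isIndObject_limit_parallelPair [HasEqualizers C] (hA : IsIndObject A)
    (hB : IsIndObject B) (f g : A ⟶ B) : IsIndObject (limit (parallelPair f g)) := by
  set P := hA.presentation
  set Q := hB.presentation
  set G : WalkingParallelPair ⥤ (PairObj P Q f g) ⥤ C :=
    parallelPair (pairφ P Q f g) (pairψ P Q f g) with hG
  have hGind : IsIndObject (limit (G ⋙ (Functor.whiskeringRight _ _ _).obj yoneda ⋙ colim)) :=
    isIndObject_limit_comp_yoneda_comp_colim G
      (fun k => isIndObject_limit_comp_yoneda (G.flip.obj k))
  -- the colimit cocones with points `A` and `B`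
  have hcA : IsColimit (P.cocone.whisker (pairFst P Q f g)) :=
    (Functor.Final.isColimitWhiskerEquiv (pairFst P Q f g) _).symm P.coconeIsColimit
  have hcB : IsColimit (Q.cocone.whisker (pairSnd P Q f g)) :=
    (Functor.Final.isColimitWhiskerEquiv (pairSnd P Q f g) _).symm Q.coconeIsColimit
  have e : (G ⋙ (Functor.whiskeringRight _ _ _).obj yoneda ⋙ colim) ≅ parallelPair f g := by
    refine parallelPair.ext
      ((colimit.isColimit _).coconePointUniqueUpToIso hcA)
      ((colimit.isColimit _).coconePointUniqueUpToIso hcB) ?_ ?_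
    · apply colimit.hom_ext
      intro k
      rw [← Category.assoc, ← Category.assoc]
      rw [show colimit.ι _ k ≫ (G ⋙ (Functor.whiskeringRight _ _ _).obj yoneda ⋙ colim).map left =
        yoneda.map k.p ≫ colimit.ι ((pairSnd P Q f g ⋙ Q.F) ⋙ yoneda) k from
        ι_colimMap _ k]
      rw [Category.assoc]
      have h1 := colimit.comp_coconePointUniqueUpToIso_hom hcB k
      have h2 := colimit.comp_coconePointUniqueUpToIso_hom hcA k
      exact (Category.assoc _ _ _).trans (Eq.trans (congrArg (yoneda.map k.p ≫ ·) h1)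
        (Eq.trans k.hp ((congrArg (· ≫ f) h2.symm).trans (Category.assoc _ _ _))))
    · apply colimit.hom_ext
      intro k
      rw [← Category.assoc, ← Category.assoc]
      rw [show colimit.ι _ k ≫ (G ⋙ (Functor.whiskeringRight _ _ _).obj yoneda ⋙ colim).map right =
        yoneda.map k.q ≫ colimit.ι ((pairSnd P Q f g ⋙ Q.F) ⋙ yoneda) k from
        ι_colimMap _ k]
      rw [Category.assoc]
      have h1 := colimit.comp_coconePointUniqueUpToIso_hom hcB k
      have h2 := colimit.comp_coconePointUniqueUpToIso_hom hcA k
      exact (Category.assoc _ _ _).trans (Eq.trans (congrArg (yoneda.map k.q ≫ ·) h1)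
        (Eq.trans k.hq ((congrArg (· ≫ g) h2.symm).trans (Category.assoc _ _ _))))
  exact IsIndObject.map (HasLimit.isoOfNatIso e).hom hGind

theorem closedUnderLimitsOfShape_walkingParallelPair_isIndObject [HasEqualizers C] :
    ObjectProperty.IsClosedUnderLimitsOfShape (IsIndObject (C := C)) WalkingParallelPair := by
  refine .mk' ?_
  rintro _ ⟨F, hF⟩
  exact IsIndObject.map (HasLimit.isoOfNatIso (diagramIsoParallelPair F).symm).hom
    (isIndObject_limit_parallelPair (hF zero) (hF one) (F.map left) (F.map right))


end Part4

end ProAux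

section Main

open ProAux

variable (C : Type (u + 1)) [Category.{u} C]

/-- The equivalence `(C ⥤ Type u) ≌ (Cᵒᵖᵒᵖ ⥤ Type u)` by precomposition. -/
noncomputable def proEps : (C ⥤ Type u) ≌ (Cᵒᵖᵒᵖ ⥤ Type u) :=
  (opOpEquivalence C).congrLeft.symm

/-- Under `proEps`, `coyoneda` becomes the Yoneda embedding of `Cᵒᵖ`. -/
noncomputable def coyonedaCompIso : coyoneda ⋙ (proEps C).functor ≅
    (yoneda : Cᵒᵖ ⥤ (Cᵒᵖᵒᵖ ⥤ Type u)) :=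
  NatIso.ofComponents (fun X => NatIso.ofComponents
    (fun d => Equiv.toIso ⟨fun (g : X.unop ⟶ d.unop.unop) => (g.op : d.unop ⟶ X),
      fun (g : d.unop ⟶ X) => (g.unop : X.unop ⟶ d.unop.unop), fun _ => rfl, fun _ => rfl⟩))

/-- The full subcategory of `Cᵒᵖᵒᵖ ⥤ Type u` on the ind-objects of `Cᵒᵖ`. -/
abbrev IndSub := ObjectProperty.FullSubcategory (IsIndObject (C := Cᵒᵖ))

theorem isIndObject_proObj (P : ProObj C) :
    IsIndObject ((proEps C).functor.obj (colimit (P.X.op ⋙ coyoneda))) := by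
  have h0 : IsIndObject (colimit (P.X.op ⋙ yoneda)) :=
    ⟨⟨.ofCocone (colimit.cocone (P.X.op ⋙ yoneda)) (colimit.isColimit _)⟩⟩
  have i2 : colimit (P.X.op ⋙ yoneda) ≅ colimit ((P.X.op ⋙ coyoneda) ⋙ (proEps C).functor) :=
    HasColimit.isoOfNatIso (Functor.isoWhiskerLeft P.X.op (coyonedaCompIso C)).symm
  have i1 : colimit ((P.X.op ⋙ coyoneda) ⋙ (proEps C).functor) ≅
      (proEps C).functor.obj (colimit (P.X.op ⋙ coyoneda)) :=
    (preservesColimitIso (proEps C).functor (P.X.op ⋙ coyoneda)).symm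
  exact (h0.map i2.hom).map i1.hom

/-- The comparison functor from `pro-C` to the opposite of the category of ind-objects
of `Cᵒᵖ`. -/
noncomputable def proToInd : ProObj C ⥤ (IndSub C)ᵒᵖ where
  obj P := op ⟨(proEps C).functor.obj (colimit (P.X.op ⋙ coyoneda)), isIndObject_proObj C P⟩
  map {P R} f := (ObjectProperty.homMk ((proEps C).functor.map f.unop)).op
  map_id P := congrArg (fun x => (ObjectProperty.homMk x).op) ((proEps C).functor.map_id _)
  map_comp {P R S} f h := congrArg (fun x => (ObjectProperty.homMk x).op)
    ((proEps C).functor.map_comp h.unop f.unop)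

instance : (proToInd C).Faithful where
  map_injective {P R} f f' hff := by
    apply Quiver.Hom.unop_inj
    exact (proEps C).functor.map_injective (congrArg (fun x => x.unop.hom) hff)

instance : (proToInd C).Full where
  map_surjective {P R} h := by
    refine ⟨((proEps C).functor.preimage h.unop.hom).op, ?_⟩
    show (ObjectProperty.homMk ((proEps C).functor.map
      ((proEps C).functor.preimage h.unop.hom))).op = h
    exact congrArg (fun x => (ObjectProperty.homMk x).op)
      ((proEps C).functor.map_preimage h.unop.hom)

instance : (proToInd C).EssSurj where
  mem_essImage Y := by
    set Pr := Y.unop.property.presentation with hPr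
    let Pob : ProObj C := ⟨Pr.Iᵒᵖ, Pr.F.leftOp⟩
    have w : Pob.X.op ≅ (opOpEquivalence Pr.I).functor ⋙ Pr.F :=
      NatIso.ofComponents (fun d => Iso.refl _)
        (fun _ => (Category.comp_id _).trans (Category.id_comp _).symm)
    have iso : (proEps C).functor.obj (colimit (Pob.X.op ⋙ coyoneda)) ≅ Y.unop.obj :=
      calc (proEps C).functor.obj (colimit (Pob.X.op ⋙ coyoneda))
          ≅ colimit ((Pob.X.op ⋙ coyoneda) ⋙ (proEps C).functor) :=
            preservesColimitIso (proEps C).functor _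
        _ ≅ colimit (Pob.X.op ⋙ yoneda) :=
            HasColimit.isoOfNatIso (Functor.isoWhiskerLeft Pob.X.op (coyonedaCompIso C))
        _ ≅ colimit ((opOpEquivalence Pr.I).functor ⋙ (Pr.F ⋙ yoneda)) :=
            HasColimit.isoOfNatIso (Functor.isoWhiskerRight w yoneda)
        _ ≅ colimit (Pr.F ⋙ yoneda) :=
            Functor.Final.colimitIso (opOpEquivalence Pr.I).functor (Pr.F ⋙ yoneda)
        _ ≅ Y.unop.obj := (colimit.isColimit _).coconePointUniqueUpToIso Pr.coconeIsColimit
    refine ⟨Pob, ⟨?_⟩⟩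
    exact Iso.op (show Y.unop ≅ _ from ⟨ObjectProperty.homMk iso.inv, ObjectProperty.homMk iso.hom,
      ObjectProperty.hom_ext _ iso.inv_hom_id, ObjectProperty.hom_ext _ iso.hom_inv_id⟩)

theorem hasLimits_indSub [HasColimits C] : HasLimitsOfSize.{u, u} (IndSub C) := by
  haveI : HasEqualizers Cᵒᵖ := inferInstance
  haveI heq : HasLimitsOfShape WalkingParallelPair (IndSub C) :=
    hasLimitsOfShape_of_closedUnderLimits (J := WalkingParallelPair) (P := IsIndObject (C := Cᵒᵖ))
  haveI : HasEqualizers (IndSub C) := heq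
  haveI hprod : HasProducts.{u} (IndSub C) := by
    intro α
    haveI : HasLimitsOfShape (Discrete α) Cᵒᵖ :=
      hasLimitsOfShape_op_of_hasColimitsOfShape
    exact hasLimitsOfShape_of_closedUnderLimits (J := Discrete α) (P := IsIndObject (C := Cᵒᵖ))
  exact has_limits_of_hasEqualizers_and_products

end Main

/-- If `C` is a cocomplete category, then its pro-category `pro-C` is cocomplete (has all
small colimits). -/
theorem proCategory_cocomplete (C : Type (u + 1)) [Category.{u} C] [HasColimits C] :
    HasColimitsOfSize.{u, u} (ProObj C) := by
  haveI : HasLimitsOfSize.{u, u} (IndSub C) := hasLimits_indSub C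
  haveI : HasColimitsOfSize.{u, u} (IndSub C)ᵒᵖ :=
    ⟨fun J _ => hasColimitsOfShape_op_of_hasLimitsOfShape⟩
  haveI : (proToInd C).IsEquivalence := {}
  exact Adjunction.has_colimits_of_equivalence (proToInd C)
end
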